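/- arXiv:2310.03085 — 3 statements merged into one kernel-verified Lean document; each statement's English description precedes it below -/
import Mathlib

section
/- Under the setup of Lemma consistency2 (D of unit measure, p₁,…,p_P i.i.d. uniform on D, frequencies ω₁,…,ω_m, B_p with entries e^{-i⟨ω_l,p_r⟩}/P), fix a vector ẑ ∈ ℂ^m and bounded densities μ, ν on D. Then E_p ⟨B_p ν(p), B_p μ(p) − ẑ⟩ = ⟨Sν, Sμ − ẑ⟩ + (1/P)·( m·⟨ν, μ⟩_{L²(D)} − ⟨Sν, Sμ⟩ ). -/
open MeasureTheory Complex
noncomputable section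

/-- Standard inner product on `Fin d → ℝ`. -/
def ip {d : ℕ} (w x : Fin d → ℝ) : ℝ := ∑ i, w i * x i

/-- The Fourier-moment sketching operator: `(Sμ)_l = ∫_D e^{-i⟨ω_l,x⟩} μ(x) dx`. -/
def sk {d : ℕ} (m : ℕ) (ω : Fin m → Fin d → ℝ) (D : Set (Fin d → ℝ))
    (μ : (Fin d → ℝ) → ℂ) : Fin m → ℂ :=
  fun l => ∫ x in D, Complex.exp (-Complex.I * (ip (ω l) x : ℂ)) * μ x

/-- The discretized sketch on a grid `p`: `(B_p μ(p))_l = (1/P) ∑_r e^{-i⟨ω_l,p_r⟩} μ(p_r)`. -/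
def dsk {d : ℕ} (m P : ℕ) (ω : Fin m → Fin d → ℝ)
    (μ : (Fin d → ℝ) → ℂ) (p : Fin P → (Fin d → ℝ)) : Fin m → ℂ :=
  fun l => (∑ r : Fin P, Complex.exp (-Complex.I * (ip (ω l) (p r) : ℂ)) * μ (p r)) / (P : ℂ)

/-- The Hermitian inner product on `ℂ^m`. -/
def hinn {m : ℕ} (u v : Fin m → ℂ) : ℂ := ∑ l, u l * (starRingEnd ℂ) (v l)

/-!
Each coordinate of `B_p ν(p)` is the empirical mean of `f = e^{-i⟨ω_l,·⟩} ν` over `P` i.i.d.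
uniform points, and likewise for `μ` with `g`. Expanding the product of two empirical means
gives `P²` pairs of sample points: the `P(P - 1)` pairs of distinct points are independent, so
their expectation factorizes into `(Sν)_l · conj (Sμ)_l`, while the `P` diagonal pairs give
`∫_D f · conj g = ⟨ν, μ⟩_{L²(D)}` because `|e^{-i⟨ω_l,x⟩}| = 1`. Summing over the `m`
frequencies produces the `1/P` bias term.
-/

open ProbabilityTheory Finset ComplexConjugate

section EmpiricalMean

variable {α 𝕜 : Type*} [MeasurableSpace α] [RCLike 𝕜] {ρ : Measure α} [IsProbabilityMeasure ρ]
  {P : ℕ}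

def empiricalMean (f : α → 𝕜) (p : Fin P → α) : 𝕜 := (∑ r, f (p r)) / P

theorem integral_comp_eval {f : α → 𝕜} (hf : AEStronglyMeasurable f ρ) (r : Fin P) :
    ∫ p : Fin P → α, f (p r) ∂Measure.pi (fun _ => ρ) = ∫ x, f x ∂ρ := by
  have heval := measurePreserving_eval (fun _ : Fin P => ρ) r
  have h := integral_map heval.measurable.aemeasurable (f := f) (by rwa [heval.map_eq])
  rwa [heval.map_eq, eq_comm] at h

theorem integral_comp_eval_mul_comp_eval_of_ne {f g : α → 𝕜} (hf : AEStronglyMeasurable f ρ)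
    (hg : AEStronglyMeasurable g ρ) {r s : Fin P} (hrs : r ≠ s) :
    ∫ p : Fin P → α, f (p r) * g (p s) ∂Measure.pi (fun _ => ρ)
      = (∫ x, f x ∂ρ) * ∫ x, g x ∂ρ := by
  have hindep : IndepFun (fun p : Fin P → α => p r) (fun p => p s) (Measure.pi fun _ => ρ) :=
    (iIndepFun_pi (X := fun _ => id) (fun _ => aemeasurable_id)).indepFun hrs
  rw [hindep.integral_fun_comp_mul_comp (measurable_pi_apply r).aemeasurable
    (measurable_pi_apply s).aemeasurable
    (by rwa [(measurePreserving_eval _ r).map_eq]) (by rwa [(measurePreserving_eval _ s).map_eq]),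
    integral_comp_eval hf, integral_comp_eval hg]

theorem memLp_comp_eval {q : ENNReal} {f : α → 𝕜} (hf : MemLp f q ρ) (r : Fin P) :
    MemLp (fun p : Fin P → α => f (p r)) q (Measure.pi fun _ => ρ) :=
  hf.comp_measurePreserving (measurePreserving_eval _ r)

theorem integrable_comp_eval {f : α → 𝕜} (hf : Integrable f ρ) (r : Fin P) :
    Integrable (fun p : Fin P → α => f (p r)) (Measure.pi fun _ => ρ) :=
  (measurePreserving_eval _ r).integrable_comp_of_integrable hf

theorem integral_sum_comp_eval_mul_sum_comp_eval {f g : α → 𝕜} (hf : MemLp f 2 ρ)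
    (hg : MemLp g 2 ρ) :
    ∫ p : Fin P → α, (∑ r, f (p r)) * ∑ s, g (p s) ∂Measure.pi (fun _ => ρ)
      = P * ∫ x, f x * g x ∂ρ + P * (P - 1) * ((∫ x, f x ∂ρ) * ∫ x, g x ∂ρ) := by
  have hint (r s : Fin P) : Integrable (fun p : Fin P → α => f (p r) * g (p s))
      (Measure.pi fun _ => ρ) := (memLp_comp_eval hf r).integrable_mul (memLp_comp_eval hg s)
  have hterm (r s : Fin P) :
      ∫ p : Fin P → α, f (p r) * g (p s) ∂Measure.pi (fun _ => ρ)
        = (∫ x, f x ∂ρ) * (∫ x, g x ∂ρ)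
          + if r = s then ∫ x, f x * g x ∂ρ - (∫ x, f x ∂ρ) * ∫ x, g x ∂ρ else 0 := by
    rcases eq_or_ne r s with rfl | hrs
    · rw [if_pos rfl, add_sub_cancel]
      exact integral_comp_eval (hf.integrable_mul hg).aestronglyMeasurable r
    · rw [if_neg hrs, add_zero]
      exact integral_comp_eval_mul_comp_eval_of_ne hf.1 hg.1 hrs
  simp_rw [sum_mul_sum]
  rw [integral_finsetSum _ fun r _ => integrable_finsetSum _ fun s _ => hint r s]
  simp_rw [integral_finsetSum _ fun s _ => hint _ s, hterm, sum_add_distrib, sum_ite_eq,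
    mem_univ, if_true, sum_const, card_univ, Fintype.card_fin, nsmul_eq_mul]
  ring

theorem memLp_empiricalMean {q : ENNReal} {f : α → 𝕜} (hf : MemLp f q ρ) :
    MemLp (empiricalMean (P := P) f) q (Measure.pi fun _ => ρ) := by
  have h := (memLp_finsetSum univ fun r _ => memLp_comp_eval (P := P) hf r).mul_const ((P : 𝕜)⁻¹)
  unfold empiricalMean
  simpa only [div_eq_mul_inv] using h

theorem integral_empiricalMean (hP : P ≠ 0) {f : α → 𝕜} (hf : Integrable f ρ) :
    ∫ p, empiricalMean f p ∂Measure.pi (fun _ : Fin P => ρ) = ∫ x, f x ∂ρ := by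
  unfold empiricalMean
  rw [integral_div, integral_finsetSum _ fun r _ => integrable_comp_eval hf r]
  simp_rw [integral_comp_eval hf.1, sum_const, card_univ, Fintype.card_fin, nsmul_eq_mul]
  field_simp

theorem integral_empiricalMean_mul_conj_sub (hP : P ≠ 0) {f g : α → 𝕜} (hf : MemLp f 2 ρ)
    (hg : MemLp g 2 ρ) (c : 𝕜) :
    ∫ p, empiricalMean f p * conj (empiricalMean g p - c) ∂Measure.pi (fun _ : Fin P => ρ)
      = (∫ x, f x ∂ρ) * conj ((∫ x, g x ∂ρ) - c)
        + ((∫ x, f x * conj (g x) ∂ρ) - (∫ x, f x ∂ρ) * conj (∫ x, g x ∂ρ)) / P := by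
  have hg' : MemLp (fun x => conj (g x)) 2 ρ := hg.star
  have hexpand (p : Fin P → α) : empiricalMean f p * conj (empiricalMean g p - c)
      = (∑ r, f (p r)) * (∑ s, conj (g (p s))) / (P * P) - empiricalMean f p * conj c := by
    simp only [empiricalMean, map_sub, map_div₀, map_sum, map_natCast]
    ring
  have hint_sums : Integrable (fun p : Fin P → α => (∑ r, f (p r)) * ∑ s, conj (g (p s)))
      (Measure.pi fun _ => ρ) :=
    (memLp_finsetSum _ fun r _ => memLp_comp_eval hf r).integrable_mul
      (memLp_finsetSum _ fun s _ => memLp_comp_eval hg' s)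
  have hint_mean := (memLp_empiricalMean (P := P) hf).integrable one_le_two
  simp_rw [hexpand]
  rw [integral_sub (hint_sums.div_const _) (hint_mean.mul_const _), integral_div,
    integral_sum_comp_eval_mul_sum_comp_eval hf hg', integral_mul_const,
    integral_empiricalMean hP (hf.integrable one_le_two), integral_conj, map_sub]
  field_simp
  ring

theorem integrable_empiricalMean_mul_conj_sub {f g : α → 𝕜} (hf : MemLp f 2 ρ)
    (hg : MemLp g 2 ρ) (c : 𝕜) :
    Integrable (fun p => empiricalMean f p * conj (empiricalMean g p - c))
      (Measure.pi fun _ : Fin P => ρ) :=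
  (memLp_empiricalMean hf).integrable_mul ((memLp_empiricalMean hg).sub (memLp_const c)).star

end EmpiricalMean

def fourierMode {d : ℕ} (w x : Fin d → ℝ) : ℂ := exp (-I * (ip w x : ℂ))

theorem norm_fourierMode {d : ℕ} (w x : Fin d → ℝ) : ‖fourierMode w x‖ = 1 := by
  simp [fourierMode, norm_exp]

theorem fourierMode_mul_conj {d : ℕ} (w x : Fin d → ℝ) :
    fourierMode w x * conj (fourierMode w x) = 1 := by
  rw [mul_conj, normSq_eq_norm_sq, norm_fourierMode]
  norm_num

theorem measurable_fourierMode {d : ℕ} (w : Fin d → ℝ) : Measurable (fourierMode w) := by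
  unfold fourierMode ip
  fun_prop

theorem MeasureTheory.MemLp.fourierMode_mul {d : ℕ} {q : ENNReal} {ρ : Measure (Fin d → ℝ)}
    {μ : (Fin d → ℝ) → ℂ} (hμ : MemLp μ q ρ) (w : Fin d → ℝ) :
    MemLp (fun x => fourierMode w x * μ x) q ρ :=
  hμ.of_le ((measurable_fourierMode w).aestronglyMeasurable.mul hμ.1)
    (.of_forall fun x => by rw [norm_mul, norm_fourierMode, one_mul])

theorem integral_fourierMode_mul_mul_conj {d : ℕ} (ρ : Measure (Fin d → ℝ)) (w : Fin d → ℝ)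
    (μ ν : (Fin d → ℝ) → ℂ) :
    ∫ x, fourierMode w x * ν x * conj (fourierMode w x * μ x) ∂ρ = ∫ x, ν x * conj (μ x) ∂ρ := by
  refine integral_congr_ae (.of_forall fun x => ?_)
  simp only [map_mul]
  linear_combination ν x * conj (μ x) * fourierMode_mul_conj w x

theorem sk_apply {d m : ℕ} (ω : Fin m → Fin d → ℝ) (D : Set (Fin d → ℝ))
    (μ : (Fin d → ℝ) → ℂ) (l : Fin m) :
    sk m ω D μ l = ∫ x in D, fourierMode (ω l) x * μ x := rfl

theorem dsk_apply {d m P : ℕ} (ω : Fin m → Fin d → ℝ) (μ : (Fin d → ℝ) → ℂ)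
    (p : Fin P → Fin d → ℝ) (l : Fin m) :
    dsk m P ω μ p l = empiricalMean (fun x => fourierMode (ω l) x * μ x) p := rfl

/-- The bias computation inside Lemma exp_deriv_naive: for a single random grid,
`E_p ⟨B_p ν(p), B_p μ(p) − ẑ⟩ = ⟨Sν, Sμ − ẑ⟩ + (1/P)(m⟨ν,μ⟩_{L²} − ⟨Sν,Sμ⟩)`. -/
theorem expectation_naive_stochastic_gradient
    (d P m : ℕ) (hP : 0 < P)
    (D : Set (Fin d → ℝ)) (hD : MeasurableSet D) (hD1 : volume D = 1)
    (ω : Fin m → Fin d → ℝ) (z : Fin m → ℂ)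
    (μ ν : (Fin d → ℝ) → ℂ) (hmμ : Measurable μ) (hmν : Measurable ν)
    (M : ℝ) (hbμ : ∀ x ∈ D, ‖μ x‖ ≤ M) (hbν : ∀ x ∈ D, ‖ν x‖ ≤ M) :
    (∫ p : Fin P → (Fin d → ℝ),
        hinn (dsk m P ω ν p) (dsk m P ω μ p - z)
        ∂Measure.pi (fun _ : Fin P => volume.restrict D))
      = hinn (sk m ω D ν) (sk m ω D μ - z)
        + (1 / (P : ℂ)) *
          ((m : ℂ) * (∫ x in D, ν x * (starRingEnd ℂ) (μ x))
            - hinn (sk m ω D ν) (sk m ω D μ)) := by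
  have : IsProbabilityMeasure (volume.restrict D) := ⟨by rw [Measure.restrict_apply_univ, hD1]⟩
  have hL2 {φ : (Fin d → ℝ) → ℂ} (hφ : Measurable φ) (hb : ∀ x ∈ D, ‖φ x‖ ≤ M) :
      MemLp φ 2 (volume.restrict D) :=
    .of_bound hφ.aestronglyMeasurable M ((ae_restrict_iff' hD).2 (.of_forall hb))
  have hF (l : Fin m) := (hL2 hmν hbν).fourierMode_mul (ω l)
  have hG (l : Fin m) := (hL2 hmμ hbμ).fourierMode_mul (ω l)
  have hentry (l : Fin m) :
      ∫ p, dsk m P ω ν p l * conj ((dsk m P ω μ p - z) l)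
          ∂Measure.pi (fun _ : Fin P => volume.restrict D)
        = sk m ω D ν l * conj ((sk m ω D μ - z) l)
          + ((∫ x in D, ν x * conj (μ x)) - sk m ω D ν l * conj (sk m ω D μ l)) / P := by
    simp only [Pi.sub_apply, dsk_apply, sk_apply]
    rw [integral_empiricalMean_mul_conj_sub hP.ne' (hF l) (hG l),
      integral_fourierMode_mul_mul_conj]
  have hint (l : Fin m) : Integrable (fun p => dsk m P ω ν p l * conj ((dsk m P ω μ p - z) l))
      (Measure.pi fun _ : Fin P => volume.restrict D) :=
    integrable_empiricalMean_mul_conj_sub (hF l) (hG l) (z l)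
  unfold hinn
  rw [integral_finsetSum _ fun l _ => hint l]
  simp_rw [hentry, sum_add_distrib, ← sum_div, sum_sub_distrib, sum_const, card_univ,
    Fintype.card_fin, nsmul_eq_mul]
  ring
end
end

section
/- Let p = (p₁,…,p_P) and q = (q₁,…,q_P) be two independent families, each i.i.d. uniform on a domain D of unit measure, and let B_p, B_q be the corresponding random sketch matrices with entries e^{-i⟨ω_l,p_r⟩}/P and e^{-i⟨ω_l,q_r⟩}/P. Fix ẑ ∈ ℂ^m and bounded measurable densities μ, ν on D. Then E_{p,q} ⟨B_p ν(p), B_q μ(q) − ẑ⟩ = ⟨Sν, Sμ − ẑ⟩ exactly, with no bias term. -/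
/-!
Each discretized sketch `B_p μ(p)` is an empirical mean of `P` i.i.d. samples of the integrand
of `Sμ`, hence an unbiased estimate of `Sμ`. Because the grids `p` and `q` are independent, the
expectation of each coordinate product of `⟨B_p ν(p), B_q μ(q) − ẑ⟩` factors into the product of
expectations; with a single shared grid the product of the two means would carry a bias.
-/

open MeasureTheory Complex
noncomputable section

theorem norm_exp_neg_I_mul_ofReal (t : ℝ) : ‖Complex.exp (-Complex.I * t)‖ = 1 := by
  rw [neg_mul, ← mul_neg, ← ofReal_neg, norm_exp_I_mul_ofReal]

theorem integral_hinn_prod {α β : Type*} [MeasurableSpace α] [MeasurableSpace β]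
    {μ : Measure α} {ν : Measure β} [SFinite μ] [SFinite ν] {m : ℕ}
    {u : α → Fin m → ℂ} {v : β → Fin m → ℂ}
    (hu : ∀ l, Integrable (fun a => u a l) μ) (hv : ∀ l, Integrable (fun b => v b l) ν) :
    ∫ ab, hinn (u ab.1) (v ab.2) ∂μ.prod ν
      = hinn (fun l => ∫ a, u a l ∂μ) (fun l => ∫ b, v b l ∂ν) := by
  have hv_conj (l : Fin m) : Integrable (fun b => starRingEnd ℂ (v b l)) ν :=
    conjCLE.toContinuousLinearMap.integrable_comp (hv l)
  unfold hinn
  rw [integral_finsetSum _ fun l _ => (hu l).mul_prod (hv_conj l)]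
  refine Finset.sum_congr rfl fun l _ => ?_
  rw [integral_prod_mul (fun a => u a l) (fun b => starRingEnd ℂ (v b l)), integral_conj]

theorem integral_empirical_mean {𝕜 α : Type*} [RCLike 𝕜] [MeasurableSpace α]
    {ρ : Measure α} [IsProbabilityMeasure ρ] {P : ℕ} (hP : 0 < P) {g : α → 𝕜}
    (hg : Integrable g ρ) :
    ∫ p : Fin P → α, (∑ r, g (p r)) / P ∂Measure.pi (fun _ => ρ) = ∫ x, g x ∂ρ := by
  rw [integral_div, integral_finsetSum _ fun r _ => integrable_comp_eval hg]
  simp_rw [integral_comp_eval (μ := fun _ : Fin P => ρ) hg.aestronglyMeasurable]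
  rw [Finset.sum_const, Finset.card_univ, Fintype.card_fin, nsmul_eq_mul,
    mul_div_cancel_left₀ _ (Nat.cast_ne_zero.mpr hP.ne')]

theorem integrable_sketch_integrand {d m : ℕ} (ω : Fin m → Fin d → ℝ) {D : Set (Fin d → ℝ)}
    (hD : MeasurableSet D) [IsFiniteMeasure (volume.restrict D)] {f : (Fin d → ℝ) → ℂ}
    (hf : Measurable f) {M : ℝ} (hfM : ∀ x ∈ D, ‖f x‖ ≤ M) (l : Fin m) :
    Integrable (fun x => Complex.exp (-Complex.I * (ip (ω l) x : ℂ)) * f x)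
      (volume.restrict D) := by
  have hip : Measurable fun x => ip (ω l) x := by unfold ip; fun_prop
  refine Integrable.of_bound (by fun_prop) M ?_
  filter_upwards [ae_restrict_mem hD] with x hx
  rw [norm_mul, norm_exp_neg_I_mul_ofReal, one_mul]
  exact hfM x hx

section SketchOnGrid

variable {d m P : ℕ} (ω : Fin m → Fin d → ℝ) {D : Set (Fin d → ℝ)}
  [IsProbabilityMeasure (volume.restrict D)] {f : (Fin d → ℝ) → ℂ}

theorem integrable_dsk_apply (hD : MeasurableSet D) (hf : Measurable f) {M : ℝ}
    (hfM : ∀ x ∈ D, ‖f x‖ ≤ M) (l : Fin m) :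
    Integrable (fun p => dsk m P ω f p l) (Measure.pi fun _ : Fin P => volume.restrict D) :=
  (integrable_finsetSum _ fun _ _ =>
    integrable_comp_eval (μ := fun _ : Fin P => volume.restrict D)
      (integrable_sketch_integrand ω hD hf hfM l)).div_const _

theorem integral_dsk_apply (hP : 0 < P) (hD : MeasurableSet D) (hf : Measurable f) {M : ℝ}
    (hfM : ∀ x ∈ D, ‖f x‖ ≤ M) (l : Fin m) :
    ∫ p, dsk m P ω f p l ∂(Measure.pi fun _ : Fin P => volume.restrict D) = sk m ω D f l :=
  integral_empirical_mean hP (integrable_sketch_integrand ω hD hf hfM l)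

end SketchOnGrid

/-- Lemma partial_meth2: with two independent i.i.d.-uniform grids `p`, `q`,
`E_{p,q} ⟨B_p ν(p), B_q μ(q) − ẑ⟩ = ⟨Sν, Sμ − ẑ⟩` exactly (no bias). -/
theorem expectation_two_grid_stochastic_gradient
    (d P m : ℕ) (hP : 0 < P)
    (D : Set (Fin d → ℝ)) (hD : MeasurableSet D) (hD1 : volume D = 1)
    (ω : Fin m → Fin d → ℝ) (z : Fin m → ℂ)
    (μ ν : (Fin d → ℝ) → ℂ) (hmμ : Measurable μ) (hmν : Measurable ν)
    (M : ℝ) (hbμ : ∀ x ∈ D, ‖μ x‖ ≤ M) (hbν : ∀ x ∈ D, ‖ν x‖ ≤ M) :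
    (∫ pq : (Fin P → (Fin d → ℝ)) × (Fin P → (Fin d → ℝ)),
        hinn (dsk m P ω ν pq.1) (dsk m P ω μ pq.2 - z)
        ∂(Measure.prod
            (Measure.pi fun _ : Fin P => volume.restrict D)
            (Measure.pi fun _ : Fin P => volume.restrict D)))
      = hinn (sk m ω D ν) (sk m ω D μ - z) := by
  have : IsProbabilityMeasure (volume.restrict D) := ⟨by simp [hD1]⟩
  rw [integral_hinn_prod (v := fun q => dsk m P ω μ q - z) (integrable_dsk_apply ω hD hmν hbν)
    fun l => (integrable_dsk_apply ω hD hmμ hbμ l).sub (integrable_const (z l))]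
  congr 1 with l
  · exact integral_dsk_apply ω hP hD hmν hbν l
  · simp only [Pi.sub_apply]
    rw [integral_sub (integrable_dsk_apply ω hD hmμ hbμ l) (integrable_const _),
      integral_dsk_apply ω hP hD hmμ hbμ l, integral_const, probReal_univ, one_smul]
end
end

section
/- Let p = (p₁,…,p_P) and q = (q₁,…,q_P) be independent families, each i.i.d. uniform on a domain D of unit measure, B_p, B_q the corresponding discretized sketching matrices with m fixed frequencies, and μ₁, μ₂ bounded densities on D. Then E_{p,q} |⟨B_p μ₁(p), B_q μ₂(q)⟩|² = (1/P²)·⟨|μ₁|², |μ₂|²⟩_{L²(D), |S*𝟏|²} + ((P−1)/P²)·( ⟨|S*Sμ₁|², |μ₂|²⟩_{L²(D)} + ⟨|S*Sμ₂|², |μ₁|²⟩_{L²(D)} ) + ((P−1)²/P²)·|⟨Sμ₁, Sμ₂⟩|², where S*z : x ↦ Σ_g z_g e^{i⟨ω_g,x⟩}, 𝟏 is the all-ones vector in ℂ^m, and ⟨ν₁, ν₂⟩_{L²(D),K} = ∫∫ ν₁(x) ν₂(y) K(x−y) dx dy for a kernel K. -/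
open MeasureTheory Complex
noncomputable section

/-- The adjoint map `S*z : x ↦ ∑_g z_g e^{i⟨ω_g,x⟩}`. -/
def Sstar {d : ℕ} (m : ℕ) (ω : Fin m → Fin d → ℝ) (z : Fin m → ℂ) (x : Fin d → ℝ) : ℂ :=
  ∑ g, z g * Complex.exp (Complex.I * (ip (ω g) x : ℂ))

/-!
Writing `|⟨u, v⟩|² = tr((u u*) (v v*)*)` and using the independence of `p` and `q`, the expectation
becomes `tr(Γ₁ Γ₂*)`, where `Γᵢ` is the second-moment matrix of `B_p μᵢ(p)`, the empirical mean of the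
i.i.d. feature vectors `Fᵢ(x) = (e^{-i⟨ω_l,x⟩} μᵢ(x))_l`. Splitting the double sum over the samples
into its diagonal and off-diagonal parts gives `Γᵢ = (1/P) E[Fᵢ Fᵢ*] + ((P-1)/P) Sμᵢ (Sμᵢ)*`.
Expanding `tr(Γ₁ Γ₂*)` and reading each of the four traces back as the integral of some `|⟨·,·⟩|²`
yields the four terms, because `⟨F₁(x), z⟩ = μ₁(x) conj(S*z(x))` and
`⟨F₁(x), F₂(y)⟩ = μ₁(x) μ₂(y) conj(S*𝟏(x - y))`.
-/

open Matrix ComplexConjugate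

section Pi

variable {ι α : Type*} [Fintype ι] [MeasurableSpace α] (ν : Measure α) [IsProbabilityMeasure ν]

theorem integral_pi_comp_eval (f : α → ℂ) (i : ι) :
    ∫ p, f (p i) ∂(Measure.pi fun _ => ν) = ∫ x, f x ∂ν := by
  classical
  have h := integral_fintype_prod_eq_prod (fun k x => if k = i then f x else 1)
    (μ := fun _ : ι => ν)
  have h_one (k : ι) :
      ∫ x, (if k = i then f x else 1) ∂ν = if k = i then ∫ x, f x ∂ν else 1 := by
    split_ifs <;> simp
  simpa [h_one] using h

theorem integral_pi_comp_eval_mul_comp_eval (f g : α → ℂ) {i j : ι} (hij : i ≠ j) :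
    ∫ p, f (p i) * g (p j) ∂(Measure.pi fun _ => ν) = (∫ x, f x ∂ν) * ∫ x, g x ∂ν := by
  classical
  have prod_eq (a b : ι → ℂ) :
      ∏ k, (if k = i then a k else if k = j then b k else 1) = a i * b j := by
    rw [Finset.prod_eq_mul i j hij] <;> simp +contextual [hij.symm]
  have h_one (k : ι) : ∫ x, (if k = i then f x else if k = j then g x else 1) ∂ν
      = if k = i then ∫ x, f x ∂ν else if k = j then ∫ x, g x ∂ν else 1 := by
    split_ifs <;> simp
  have h := integral_fintype_prod_eq_prod
    (fun k x => if k = i then f x else if k = j then g x else 1) (μ := fun _ : ι => ν)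
  simpa only [h_one, prod_eq] using h

theorem integral_pi_sum_comp_eval_mul_sum_comp_eval (f g : α → ℂ) (hf : MemLp f 2 ν)
    (hg : MemLp g 2 ν) :
    ∫ p, (∑ i, f (p i)) * (∑ j, g (p j)) ∂(Measure.pi fun _ : ι => ν)
      = Fintype.card ι * ∫ x, f x * g x ∂ν
        + Fintype.card ι * (Fintype.card ι - 1) * ((∫ x, f x ∂ν) * ∫ x, g x ∂ν) := by
  classical
  have hint (i j : ι) : Integrable (fun p => f (p i) * g (p j)) (Measure.pi fun _ => ν) :=
    (hf.comp_measurePreserving (measurePreserving_eval _ i)).integrable_mul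
      (hg.comp_measurePreserving (measurePreserving_eval _ j))
  have hpair (i j : ι) : ∫ p, f (p i) * g (p j) ∂(Measure.pi fun _ => ν)
      = if i = j then ∫ x, f x * g x ∂ν else (∫ x, f x ∂ν) * ∫ x, g x ∂ν := by
    split_ifs with h
    · subst h
      exact integral_pi_comp_eval ν (fun x => f x * g x) i
    · exact integral_pi_comp_eval_mul_comp_eval ν f g h
  have hrow (i : ι) (a b : ℂ) :
      ∑ j, (if i = j then a else b) = a + (Fintype.card ι - 1) * b := by
    calc ∑ j, (if i = j then a else b) = ∑ j, (b + if i = j then a - b else 0) := by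
          congr with j
          split_ifs <;> ring
      _ = _ := by
          simp only [Finset.sum_add_distrib, Finset.sum_const, Finset.card_univ, nsmul_eq_mul,
            Finset.sum_ite_eq, Finset.mem_univ, if_true]
          ring
  simp_rw [Finset.sum_mul_sum]
  rw [integral_finsetSum _ fun i _ => integrable_finsetSum _ fun j _ => hint i j]
  simp_rw [integral_finsetSum _ fun j _ => hint _ j, hpair, hrow]
  simp only [Finset.sum_const, Finset.card_univ, nsmul_eq_mul]
  ring

theorem memLp_pi_sum_comp_eval_div {f : α → ℂ} {q : ENNReal} (hf : MemLp f q ν) (c : ℂ) :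
    MemLp (fun p : ι → α => (∑ i, f (p i)) / c) q (Measure.pi fun _ => ν) :=
  (memLp_finsetSum _ fun i _ =>
    hf.comp_measurePreserving (measurePreserving_eval _ i)).mul_const c⁻¹

end Pi

section SecondMoment

variable {α β κ : Type*} [MeasurableSpace α] [MeasurableSpace β]

def secondMoment (μ : Measure α) (U : α → κ → ℂ) : Matrix κ κ ℂ :=
  Matrix.of fun k l => ∫ x, U x k * star (U x l) ∂μ

theorem integrable_mul_star {μ : Measure α} {U : α → κ → ℂ}
    (hU : ∀ k, MemLp (fun x => U x k) 2 μ) (k l : κ) :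
    Integrable (fun x => U x k * star (U x l)) μ :=
  (hU k).integrable_mul (hU l).star

theorem secondMoment_pi_average {ι : Type*} [Fintype ι] (ν : Measure α) [IsProbabilityMeasure ν]
    (U : α → κ → ℂ) (hU : ∀ k, MemLp (fun x => U x k) 2 ν) :
    secondMoment (Measure.pi fun _ : ι => ν) (fun p k => (∑ i, U (p i) k) / Fintype.card ι)
      = (Fintype.card ι : ℝ)⁻¹ • secondMoment ν U
        + (((Fintype.card ι : ℝ) - 1) / Fintype.card ι) •
          vecMulVec (fun k => ∫ x, U x k ∂ν) (star fun k => ∫ x, U x k ∂ν) := by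
  ext k l
  have h := integral_pi_sum_comp_eval_mul_sum_comp_eval (ι := ι) ν _ _ (hU k) (hU l).star
  simp only [Pi.star_apply] at h
  set n := Fintype.card ι
  have hdiv (p : ι → α) : (∑ i, U (p i) k) / n * star ((∑ i, U (p i) l) / n)
      = (∑ i, U (p i) k) * (∑ i, star (U (p i) l)) / (n * n) := by
    rw [star_div₀, star_sum, star_natCast, div_mul_div_comm]
  simp only [secondMoment, Matrix.of_apply, Matrix.add_apply, Matrix.smul_apply, vecMulVec_apply,
    Pi.star_apply, hdiv]
  rw [integral_div, h]
  simp only [Complex.real_smul, RCLike.star_def, ← integral_conj]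
  push_cast
  -- for empty `ι` both sides vanish, by the conventions `x / 0 = 0` and `0⁻¹ = 0`
  rcases eq_or_ne (n : ℂ) 0 with hn | hn
  · simp [hn]
  · field_simp

variable [Fintype κ]

theorem trace_mul_conjTranspose_eq_sum (G H : Matrix κ κ ℂ) :
    (G * Hᴴ).trace = ∑ k, ∑ l, G k l * star (H k l) := by
  simp [Matrix.trace, Matrix.mul_apply]

theorem trace_smul_add_smul_mul_conjTranspose (a b : ℝ) (G G' H H' : Matrix κ κ ℂ) :
    ((a • G + b • G') * (a • H + b • H')ᴴ).trace
      = (a ^ 2 : ℝ) • (G * Hᴴ).trace + (a * b : ℝ) • ((G * H'ᴴ).trace + (G' * Hᴴ).trace)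
        + (b ^ 2 : ℝ) • (G' * H'ᴴ).trace := by
  simp only [conjTranspose_add, conjTranspose_smul, star_trivial, Matrix.add_mul, Matrix.mul_add,
    Matrix.smul_mul, Matrix.mul_smul, trace_add, trace_smul, smul_add, smul_smul]
  module

theorem integral_trace_vecMulVec_mul {μ : Measure α} {U : α → κ → ℂ}
    (hU : ∀ k, MemLp (fun x => U x k) 2 μ) (K : Matrix κ κ ℂ) :
    ∫ x, (vecMulVec (U x) (star (U x)) * K).trace ∂μ = (secondMoment μ U * K).trace := by
  simp only [Matrix.trace, Matrix.diag, Matrix.mul_apply, vecMulVec_apply, Pi.star_apply,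
    secondMoment, Matrix.of_apply]
  rw [integral_finsetSum _ fun k _ => integrable_finsetSum _ fun l _ =>
    (integrable_mul_star hU k l).mul_const _]
  refine Finset.sum_congr rfl fun k _ => ?_
  rw [integral_finsetSum _ fun l _ => (integrable_mul_star hU k l).mul_const _]
  exact Finset.sum_congr rfl fun l _ => integral_mul_const _ _

end SecondMoment

section Hinn

variable {α β : Type*} [MeasurableSpace α] [MeasurableSpace β] {μ : Measure α} {ν : Measure β}
  {m : ℕ} {U : α → Fin m → ℂ} {V : β → Fin m → ℂ}

theorem normSq_hinn_eq_trace (u v : Fin m → ℂ) :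
    (normSq (hinn u v) : ℂ) = (vecMulVec u (star u) * (vecMulVec v (star v))ᴴ).trace := by
  rw [trace_mul_conjTranspose_eq_sum, ← mul_conj, hinn, map_sum, Finset.sum_mul_sum]
  simp only [vecMulVec_apply, Pi.star_apply, star_mul', map_mul, conj_conj, RCLike.star_def]
  exact Finset.sum_congr rfl fun k _ => Finset.sum_congr rfl fun l _ => by ring

theorem normSq_hinn_comm (u v : Fin m → ℂ) : normSq (hinn u v) = normSq (hinn v u) := by
  rw [← normSq_conj, hinn, hinn, map_sum]
  simp only [map_mul, conj_conj, mul_comm]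

theorem integral_normSq_hinn_left (hU : ∀ k, MemLp (fun x => U x k) 2 μ) (v : Fin m → ℂ) :
    ((∫ x, normSq (hinn (U x) v) ∂μ : ℝ) : ℂ)
      = (secondMoment μ U * (vecMulVec v (star v))ᴴ).trace := by
  rw [← integral_complex_ofReal]
  simp_rw [normSq_hinn_eq_trace]
  exact integral_trace_vecMulVec_mul hU _

theorem integral_normSq_hinn_right (u : Fin m → ℂ) (hV : ∀ k, MemLp (fun y => V y k) 2 ν) :
    ((∫ y, normSq (hinn u (V y)) ∂ν : ℝ) : ℂ)
      = (vecMulVec u (star u) * (secondMoment ν V)ᴴ).trace := by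
  simp_rw [normSq_hinn_comm u]
  rw [← conj_ofReal, integral_normSq_hinn_left hV, ← Complex.star_def, ← trace_conjTranspose,
    conjTranspose_mul, conjTranspose_conjTranspose]

theorem integral_integral_normSq_hinn (hU : ∀ k, MemLp (fun x => U x k) 2 μ)
    (hV : ∀ k, MemLp (fun y => V y k) 2 ν) :
    ((∫ x, ∫ y, normSq (hinn (U x) (V y)) ∂ν ∂μ : ℝ) : ℂ)
      = (secondMoment μ U * (secondMoment ν V)ᴴ).trace := by
  rw [← integral_complex_ofReal]
  simp_rw [integral_normSq_hinn_right _ hV]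
  exact integral_trace_vecMulVec_mul hU _

theorem integral_prod_normSq_hinn [SFinite μ] [SFinite ν]
    (hU : ∀ k, MemLp (fun x => U x k) 2 μ) (hV : ∀ k, MemLp (fun y => V y k) 2 ν) :
    ((∫ z, normSq (hinn (U z.1) (V z.2)) ∂(μ.prod ν) : ℝ) : ℂ)
      = (secondMoment μ U * (secondMoment ν V)ᴴ).trace := by
  have hint (k l : Fin m) : Integrable
      (fun z : α × β => U z.1 k * star (U z.1 l) * (star (V z.2 k) * V z.2 l)) (μ.prod ν) :=
    (integrable_mul_star hU k l).mul_prod ((hV k).star.integrable_mul (hV l))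
  rw [← integral_complex_ofReal]
  simp_rw [normSq_hinn_eq_trace, trace_mul_conjTranspose_eq_sum, vecMulVec_apply, Pi.star_apply,
    star_mul', star_star]
  rw [integral_finsetSum _ fun k _ => integrable_finsetSum _ fun l _ => hint k l]
  simp only [secondMoment, Matrix.of_apply]
  refine Finset.sum_congr rfl fun k _ => ?_
  rw [integral_finsetSum _ fun l _ => hint k l]
  refine Finset.sum_congr rfl fun l _ => ?_
  rw [integral_prod_mul (fun x => U x k * star (U x l)) (fun y => star (V y k) * V y l),
    RCLike.star_def, ← integral_conj]
  simp

end Hinn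

section Sketch

variable {d m : ℕ} (ω : Fin m → Fin d → ℝ)

/-- `dsk m P ω μ p` and `sk m ω D μ` are, definitionally, the empirical mean over the samples `p`
and the mean over `D` of this feature vector. -/
def fourierFeature (μ : (Fin d → ℝ) → ℝ) (x : Fin d → ℝ) : Fin m → ℂ :=
  fun l => exp (-I * ip (ω l) x) * μ x

theorem ip_sub (w x y : Fin d → ℝ) : ip w (x - y) = ip w x - ip w y := by
  simp [ip, mul_sub, Finset.sum_sub_distrib]

theorem continuous_ip (w : Fin d → ℝ) : Continuous (ip w) := by
  unfold ip
  fun_prop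

theorem conj_exp_I_mul_ofReal (t : ℝ) : conj (exp (I * t)) = exp (-I * t) := by
  rw [← exp_conj, map_mul, conj_I, conj_ofReal, neg_mul]

theorem hinn_fourierFeature (μ : (Fin d → ℝ) → ℝ) (x : Fin d → ℝ) (z : Fin m → ℂ) :
    hinn (fourierFeature ω μ x) z = μ x * conj (Sstar m ω z x) := by
  simp only [hinn, fourierFeature, Sstar, map_sum, map_mul, conj_exp_I_mul_ofReal, Finset.mul_sum]
  exact Finset.sum_congr rfl fun l _ => by ring

theorem Sstar_fourierFeature (μ : (Fin d → ℝ) → ℝ) (x y : Fin d → ℝ) :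
    Sstar m ω (fourierFeature ω μ y) x = μ y * Sstar m ω (fun _ => 1) (x - y) := by
  simp only [Sstar, fourierFeature, ip_sub, Finset.mul_sum, one_mul]
  refine Finset.sum_congr rfl fun l _ => ?_
  rw [mul_comm (exp _), mul_assoc, ← exp_add]
  push_cast
  ring_nf

theorem normSq_hinn_fourierFeature (μ : (Fin d → ℝ) → ℝ) (x : Fin d → ℝ) (z : Fin m → ℂ) :
    normSq (hinn (fourierFeature ω μ x) z) = normSq (Sstar m ω z x) * μ x ^ 2 := by
  rw [hinn_fourierFeature, normSq_mul, normSq_conj, normSq_ofReal]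
  ring

theorem normSq_hinn_fourierFeature_fourierFeature (μ μ' : (Fin d → ℝ) → ℝ) (x y : Fin d → ℝ) :
    normSq (hinn (fourierFeature ω μ x) (fourierFeature ω μ' y))
      = μ x ^ 2 * μ' y ^ 2 * normSq (Sstar m ω (fun _ => 1) (x - y)) := by
  rw [normSq_hinn_fourierFeature, Sstar_fourierFeature, normSq_mul, normSq_ofReal]
  ring

theorem memLp_fourierFeature {ν : Measure (Fin d → ℝ)} {μ : (Fin d → ℝ) → ℝ} {q : ENNReal}
    (hμ : MemLp μ q ν) (l : Fin m) : MemLp (fun x => fourierFeature ω μ x l) q ν := by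
  have := continuous_ip (ω l)
  refine hμ.of_le ?_ (Filter.Eventually.of_forall fun x => ?_)
  · exact (Continuous.aestronglyMeasurable (by fun_prop)).mul
      (continuous_ofReal.comp_aestronglyMeasurable hμ.1)
  · simp [fourierFeature, norm_exp]

end Sketch

theorem second_moment_bilinear_term_general
    (d P m : ℕ)
    (D : Set (Fin d → ℝ)) (hD : MeasurableSet D) (hD1 : volume D = 1)
    (ω : Fin m → Fin d → ℝ)
    (μ₁ μ₂ : (Fin d → ℝ) → ℝ) (hm1 : Measurable μ₁) (hm2 : Measurable μ₂)
    (M : ℝ) (hb1 : ∀ x ∈ D, |μ₁ x| ≤ M) (hb2 : ∀ x ∈ D, |μ₂ x| ≤ M) :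
    (∫ pq : (Fin P → (Fin d → ℝ)) × (Fin P → (Fin d → ℝ)),
        Complex.normSq
          (hinn (dsk m P ω (fun x => (μ₁ x : ℂ)) pq.1)
                (dsk m P ω (fun x => (μ₂ x : ℂ)) pq.2))
        ∂(Measure.prod
            (Measure.pi fun _ : Fin P => volume.restrict D)
            (Measure.pi fun _ : Fin P => volume.restrict D)))
      = (1 / (P : ℝ) ^ 2) *
          (∫ x in D, ∫ y in D,
            (μ₁ x) ^ 2 * (μ₂ y) ^ 2 *
              Complex.normSq (Sstar m ω (fun _ => (1 : ℂ)) (x - y)))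
        + (((P : ℝ) - 1) / (P : ℝ) ^ 2) *
          ((∫ x in D,
              Complex.normSq (Sstar m ω (sk m ω D (fun x => (μ₁ x : ℂ))) x) * (μ₂ x) ^ 2)
           + (∫ x in D,
              Complex.normSq (Sstar m ω (sk m ω D (fun x => (μ₂ x : ℂ))) x) * (μ₁ x) ^ 2))
        + (((P : ℝ) - 1) ^ 2 / (P : ℝ) ^ 2) *
          Complex.normSq
            (hinn (sk m ω D (fun x => (μ₁ x : ℂ))) (sk m ω D (fun x => (μ₂ x : ℂ)))) := by
  set ν : Measure (Fin d → ℝ) := volume.restrict D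
  have : IsProbabilityMeasure ν := ⟨by simp [ν, hD1]⟩
  have hL2 {μ : (Fin d → ℝ) → ℝ} (hμ : Measurable μ) (hb : ∀ x ∈ D, |μ x| ≤ M) (l : Fin m) :
      MemLp (fun x => fourierFeature ω μ x l) 2 ν :=
    memLp_fourierFeature ω (MemLp.of_bound hμ.aestronglyMeasurable M
      ((ae_restrict_mem hD).mono fun x hx => hb x hx)) l
  have hΓ {μ : (Fin d → ℝ) → ℝ} (hμ : Measurable μ) (hb : ∀ x ∈ D, |μ x| ≤ M) :
      secondMoment (Measure.pi fun _ : Fin P => ν) (dsk m P ω fun x => (μ x : ℂ))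
        = (P : ℝ)⁻¹ • secondMoment ν (fourierFeature ω μ)
          + (((P : ℝ) - 1) / P) • vecMulVec (sk m ω D fun x => (μ x : ℂ))
            (star (sk m ω D fun x => (μ x : ℂ))) := by
    have h := secondMoment_pi_average (ι := Fin P) ν (fourierFeature ω μ) (hL2 hμ hb)
    rw [Fintype.card_fin] at h
    exact h
  have hdsk {μ : (Fin d → ℝ) → ℝ} (hμ : Measurable μ) (hb : ∀ x ∈ D, |μ x| ≤ M) (l : Fin m) :
      MemLp (fun p => dsk m P ω (fun x => (μ x : ℂ)) p l) 2 (Measure.pi fun _ : Fin P => ν) :=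
    memLp_pi_sum_comp_eval_div ν (hL2 hμ hb l) P
  apply ofReal_injective
  rw [integral_prod_normSq_hinn (hdsk hm1 hb1) (hdsk hm2 hb2), hΓ hm1 hb1, hΓ hm2 hb2,
    trace_smul_add_smul_mul_conjTranspose,
    ← integral_integral_normSq_hinn (hL2 hm1 hb1) (hL2 hm2 hb2),
    ← integral_normSq_hinn_left (hL2 hm1 hb1), ← integral_normSq_hinn_right _ (hL2 hm2 hb2),
    ← normSq_hinn_eq_trace]
  simp_rw [normSq_hinn_fourierFeature_fourierFeature, normSq_hinn_comm _ (fourierFeature ω μ₂ _),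
    normSq_hinn_fourierFeature, Complex.real_smul]
  push_cast
  ring

/-- Central second-moment computation (equation proof_var5) in Lemma variance:
`E_{p,q}|⟨B_pμ₁(p),B_qμ₂(q)⟩|² = (1/P²)⟨|μ₁|²,|μ₂|²⟩_{L²,|S*𝟏|²}
 + ((P−1)/P²)(⟨|S*Sμ₁|²,|μ₂|²⟩ + ⟨|S*Sμ₂|²,|μ₁|²⟩) + ((P−1)²/P²)|⟨Sμ₁,Sμ₂⟩|²`. -/
theorem second_moment_bilinear_term
    (d P m : ℕ) (hP : 0 < P)
    (D : Set (Fin d → ℝ)) (hD : MeasurableSet D) (hD1 : volume D = 1)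
    (ω : Fin m → Fin d → ℝ)
    (μ₁ μ₂ : (Fin d → ℝ) → ℝ) (hm1 : Measurable μ₁) (hm2 : Measurable μ₂)
    (M : ℝ) (hb1 : ∀ x ∈ D, |μ₁ x| ≤ M) (hb2 : ∀ x ∈ D, |μ₂ x| ≤ M) :
    (∫ pq : (Fin P → (Fin d → ℝ)) × (Fin P → (Fin d → ℝ)),
        Complex.normSq
          (hinn (dsk m P ω (fun x => (μ₁ x : ℂ)) pq.1)
                (dsk m P ω (fun x => (μ₂ x : ℂ)) pq.2))
        ∂(Measure.prod
            (Measure.pi fun _ : Fin P => volume.restrict D)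
            (Measure.pi fun _ : Fin P => volume.restrict D)))
      = (1 / (P : ℝ) ^ 2) *
          (∫ x in D, ∫ y in D,
            (μ₁ x) ^ 2 * (μ₂ y) ^ 2 *
              Complex.normSq (Sstar m ω (fun _ => (1 : ℂ)) (x - y)))
        + (((P : ℝ) - 1) / (P : ℝ) ^ 2) *
          ((∫ x in D,
              Complex.normSq (Sstar m ω (sk m ω D (fun x => (μ₁ x : ℂ))) x) * (μ₂ x) ^ 2)
           + (∫ x in D,
              Complex.normSq (Sstar m ω (sk m ω D (fun x => (μ₂ x : ℂ))) x) * (μ₁ x) ^ 2))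
        + (((P : ℝ) - 1) ^ 2 / (P : ℝ) ^ 2) *
          Complex.normSq
            (hinn (sk m ω D (fun x => (μ₁ x : ℂ))) (sk m ω D (fun x => (μ₂ x : ℂ)))) :=
  second_moment_bilinear_term_general d P m D hD hD1 ω μ₁ μ₂ hm1 hm2 M hb1 hb2
end
end
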